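/- arXiv:1403.4267 — 2 statements merged into one kernel-verified Lean document; each statement's English description precedes it below -/
import Mathlib

section
/- Let X be a Hermitian positive semidefinite matrix of size n×n with eigendecomposition X = E Λ E', where X = x x' for a nonzero vector x ∈ ℂⁿ, so Λ has a single nonzero eigenvalue ‖x‖² in the (1,1) position. Let Δ = E [[a, b'],[b, C]] E' with a ∈ ℂ, b ∈ ℂ^{n-1}, C Hermitian of size (n-1)×(n-1). Then there exists c₀ > 0 such that X + cΔ is positive semidefinite for all c ∈ (0, c₀] if and only if a ∈ ℝ, C is positive semidefinite, and b lies in the range of C. -/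
/-!
Conjugating by the unitary `E`, `X + c • Δ` is positive semidefinite iff the bordered matrix
`[[r + c a, c b*], [c b, c C]]` is, where `r = ‖x‖²`. A positive semidefinite bordered matrix
`[[α, b*], [b, C]]` has `0 ≤ α` and `C ⪰ 0`, and `b` is orthogonal to `ker C`: for `u ∈ ker C` the
vector `(0, u)` is isotropic for the quadratic form, hence in the kernel of the matrix. Since `C`
is Hermitian, `(ker C)ᗮ = range C`. Conversely, if `b = C w` then
`[[α, b*], [b, C]] = (α - w* C w) e₁ e₁* + Kᴴ C K` with `K = [w | 1]`, which is positive
semidefinite once `w* C w ≤ α`; for `α = r + c a` with `a` real this holds for all small `c > 0`.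
-/

open scoped ComplexOrder Matrix
open Matrix

theorem exists_pos_forall_mem_Ioc_mul_le {r : ℝ} (hr : 0 < r) (s : ℝ) :
    ∃ c₀ > 0, ∀ c ∈ Set.Ioc 0 c₀, c * s ≤ r := by
  refine ⟨r / (|s| + 1), by positivity, fun c ⟨hc, hcc₀⟩ => ?_⟩
  calc c * s ≤ c * (|s| + 1) := by gcongr; linarith [le_abs_self s]
    _ ≤ r / (|s| + 1) * (|s| + 1) := by gcongr
    _ = r := div_mul_cancel₀ r (by positivity)

namespace Matrix

variable {𝕜 : Type*} [RCLike 𝕜] {n : Type*}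

def bordered (α : 𝕜) (b : n → 𝕜) (C : Matrix n n 𝕜) : Matrix (Fin 1 ⊕ n) (Fin 1 ⊕ n) 𝕜 :=
  fromBlocks (of fun _ _ => α) (replicateRow (Fin 1) (star b)) (replicateCol (Fin 1) b) C

theorem fromBlocks_add_bordered (α β : 𝕜) (b : n → 𝕜) (C : Matrix n n 𝕜) :
    fromBlocks (of fun _ _ => α) 0 0 0 + bordered β b C = bordered (α + β) b C := by
  ext (i | i) (j | j) <;> simp [bordered]

theorem smul_bordered {c : 𝕜} (hc : IsSelfAdjoint c) (β : 𝕜) (b : n → 𝕜) (C : Matrix n n 𝕜) :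
    c • bordered β b C = bordered (c * β) (c • b) (c • C) := by
  ext (i | i) (j | j) <;> simp [bordered, hc.star_eq]

theorem posSemidef_fromBlocks_zero [DecidableEq n] {d : 𝕜} (hd : 0 ≤ d) :
    (fromBlocks (of fun _ _ => d) 0 0 0 : Matrix (Fin 1 ⊕ n) (Fin 1 ⊕ n) 𝕜).PosSemidef := by
  have hdiag : (of fun _ _ => d : Matrix (Fin 1) (Fin 1) 𝕜) = diagonal fun _ => d := by
    ext i j; simp [Subsingleton.elim i j]
  rw [hdiag, ← diagonal_zero, fromBlocks_diagonal]
  exact PosSemidef.diagonal fun i => by cases i <;> simp [hd]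

variable [Fintype n]

theorem bordered_mulVec_sumElim_zero (α : 𝕜) (b : n → 𝕜) (C : Matrix n n 𝕜) (u : n → 𝕜) :
    bordered α b C *ᵥ Sum.elim 0 u = Sum.elim (fun _ => star b ⬝ᵥ u) (C *ᵥ u) := by
  ext (i | i) <;> simp [bordered, mulVec, dotProduct]

variable [DecidableEq n]

theorem IsHermitian.exists_mulVec_eq_of_forall_mulVec_eq_zero
    {C : Matrix n n 𝕜} (hC : C.IsHermitian) {b : n → 𝕜}
    (hb : ∀ u, C *ᵥ u = 0 → star b ⬝ᵥ u = 0) : ∃ w, C *ᵥ w = b := by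
  have hmem : WithLp.toLp 2 b ∈ LinearMap.range (toEuclideanLin C) := by
    rw [← Submodule.orthogonal_orthogonal (LinearMap.range _),
      (isSymmetric_toEuclideanLin_iff.mpr hC).orthogonal_range]
    intro u hu
    have := congrArg star (hb u.ofLp (congrArg WithLp.ofLp hu))
    rwa [star_dotProduct, star_star, star_zero, dotProduct_comm] at this
  obtain ⟨w, hw⟩ := hmem
  exact ⟨w.ofLp, congrArg WithLp.ofLp hw⟩

theorem PosSemidef.of_bordered {α : 𝕜} {b : n → 𝕜} {C : Matrix n n 𝕜}
    (h : (bordered α b C).PosSemidef) : 0 ≤ α ∧ C.PosSemidef ∧ ∃ w, C *ᵥ w = b := by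
  have hC : C.PosSemidef := h.submatrix Sum.inr
  refine ⟨h.diag_nonneg (i := Sum.inl 0), hC,
    hC.isHermitian.exists_mulVec_eq_of_forall_mulVec_eq_zero fun u hu => ?_⟩
  have hv := (h.dotProduct_mulVec_zero_iff (Sum.elim 0 u)).mp <| by
    rw [bordered_mulVec_sumElim_zero, Function.star_sumElim, sumElim_dotProduct_sumElim, hu]
    simp
  rw [bordered_mulVec_sumElim_zero] at hv
  simpa using congrFun hv (Sum.inl 0)

theorem conjTranspose_fromCols_mul_mul_fromCols {C : Matrix n n 𝕜} (hC : C.IsHermitian)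
    (w : n → 𝕜) :
    (fromCols (replicateCol (Fin 1) w) 1)ᴴ * C * fromCols (replicateCol (Fin 1) w) 1 =
      bordered (star w ⬝ᵥ C *ᵥ w) (C *ᵥ w) C := by
  have hrow : replicateRow (Fin 1) (star w) * C = replicateRow (Fin 1) (star (C *ᵥ w)) := by
    rw [← replicateRow_vecMul, star_mulVec, hC.eq]
  rw [conjTranspose_fromCols_eq_fromRows_conjTranspose, conjTranspose_replicateCol,
    conjTranspose_one, fromRows_mul, Matrix.one_mul, fromRows_mul_fromCols, Matrix.mul_one,
    Matrix.mul_one, Matrix.mul_assoc, ← replicateCol_mulVec, replicateRow_mul_replicateCol, hrow]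
  rfl

theorem posSemidef_bordered_mulVec {α : 𝕜} {C : Matrix n n 𝕜} (hC : C.PosSemidef) {w : n → 𝕜}
    (hα : star w ⬝ᵥ C *ᵥ w ≤ α) : (bordered α (C *ᵥ w) C).PosSemidef := by
  have hsplit : bordered α (C *ᵥ w) C = fromBlocks (of fun _ _ => α - star w ⬝ᵥ C *ᵥ w) 0 0 0 +
      (fromCols (replicateCol (Fin 1) w) 1)ᴴ * C * fromCols (replicateCol (Fin 1) w) 1 := by
    rw [conjTranspose_fromCols_mul_mul_fromCols hC.isHermitian, fromBlocks_add_bordered,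
      sub_add_cancel]
  rw [hsplit]
  exact (posSemidef_fromBlocks_zero (sub_nonneg.mpr hα)).add (hC.conjTranspose_mul_mul_same _)

theorem PosSemidef.of_bordered_smul {r c : ℝ} (hc : 0 < c) {a : 𝕜} {b : n → 𝕜}
    {C : Matrix n n 𝕜} (h : (bordered (r + c * a) ((c : 𝕜) • b) ((c : 𝕜) • C)).PosSemidef) :
    RCLike.im a = 0 ∧ C.PosSemidef ∧ ∃ w, C *ᵥ w = b := by
  obtain ⟨hα, hcC, w, hw⟩ := h.of_bordered
  have hc' : (c : 𝕜) ≠ 0 := RCLike.ofReal_ne_zero.mpr hc.ne'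
  refine ⟨?_, ?_, w, ?_⟩
  · simpa [hc.ne'] using (RCLike.nonneg_iff.mp hα).2
  · have := hcC.smul (RCLike.ofReal_nonneg (K := 𝕜) |>.mpr (inv_nonneg.mpr hc.le))
    rwa [RCLike.ofReal_inv, inv_smul_smul₀ hc'] at this
  · rw [smul_mulVec] at hw
    exact smul_right_injective _ hc' hw

theorem exists_pos_forall_posSemidef_bordered_smul {r : ℝ} (hr : 0 < r) {a : 𝕜}
    (ha : RCLike.im a = 0) {C : Matrix n n 𝕜} (hC : C.PosSemidef) (w : n → 𝕜) :
    ∃ c₀ > 0, ∀ c ∈ Set.Ioc (0 : ℝ) c₀,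
      (bordered (r + c * a) ((c : 𝕜) • (C *ᵥ w)) ((c : 𝕜) • C)).PosSemidef := by
  have hμ := RCLike.nonneg_iff.mp (hC.dotProduct_mulVec_nonneg w)
  obtain ⟨c₀, hc₀, hle⟩ :=
    exists_pos_forall_mem_Ioc_mul_le hr (RCLike.re (star w ⬝ᵥ C *ᵥ w) - RCLike.re a)
  refine ⟨c₀, hc₀, fun c hc => ?_⟩
  rw [← smul_mulVec]
  refine posSemidef_bordered_mulVec (hC.smul (RCLike.ofReal_nonneg.mpr hc.1.le)) ?_
  rw [smul_mulVec, dotProduct_smul, RCLike.le_iff_re_im]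
  constructor
  · simpa [mul_sub, sub_le_iff_le_add'] using hle c hc
  · simp [ha, hμ.2]

end Matrix

theorem stmt_0_general (m : ℕ) (x : (Fin 1 ⊕ Fin m) → ℂ) (hx : x ≠ 0)
    (X : Matrix (Fin 1 ⊕ Fin m) (Fin 1 ⊕ Fin m) ℂ)
    (E : Matrix (Fin 1 ⊕ Fin m) (Fin 1 ⊕ Fin m) ℂ)
    (hE : E ∈ Matrix.unitaryGroup (Fin 1 ⊕ Fin m) ℂ)
    (hXE : X = E * Matrix.fromBlocks
      (fun _ _ => ((∑ i, ‖x i‖ ^ 2 : ℝ) : ℂ)) 0 0 0 * Eᴴ)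
    (a : ℂ) (b : Fin m → ℂ) (C : Matrix (Fin m) (Fin m) ℂ)
    (Δ : Matrix (Fin 1 ⊕ Fin m) (Fin 1 ⊕ Fin m) ℂ)
    (hΔ : Δ = E * Matrix.fromBlocks (fun _ _ => a) (fun _ j => star (b j))
      (fun i _ => b i) C * Eᴴ) :
    (∃ c₀ > 0, ∀ c ∈ Set.Ioc (0 : ℝ) c₀, (X + (c : ℂ) • Δ).PosSemidef) ↔
      (a.im = 0 ∧ C.PosSemidef ∧ ∃ w, C.mulVec w = b) := by
  set r : ℝ := ∑ i, ‖x i‖ ^ 2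
  have hr : 0 < r := by
    obtain ⟨i, hi⟩ := Function.ne_iff.mp hx
    exact Finset.sum_pos' (fun j _ => by positivity)
      ⟨i, Finset.mem_univ i, pow_pos (norm_pos_iff.mpr hi) 2⟩
  have hpsd_iff (c : ℝ) : (X + (c : ℂ) • Δ).PosSemidef ↔
      (bordered (r + c * a) ((c : ℂ) • b) ((c : ℂ) • C)).PosSemidef := by
    -- restated with `of` and `bordered`, so that `rw` sees matrices rather than bare functions
    have hX' : X = E * fromBlocks (of fun _ _ => (r : ℂ)) 0 0 0 * star E := hXE
    have hΔ' : Δ = E * bordered a b C * star E := hΔ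
    rw [hX', hΔ', ← Matrix.smul_mul, ← Matrix.mul_smul, ← Matrix.add_mul, ← Matrix.mul_add,
      smul_bordered (Complex.conj_ofReal c), fromBlocks_add_bordered]
    exact (Unitary.isUnit_coe (U := ⟨E, hE⟩)).posSemidef_star_right_conjugate_iff
  constructor
  · rintro ⟨c₀, hc₀, hpsd⟩
    exact ((hpsd_iff c₀).mp (hpsd c₀ ⟨hc₀, le_rfl⟩)).of_bordered_smul hc₀
  · rintro ⟨ha, hC, w, rfl⟩
    obtain ⟨c₀, hc₀, hpsd⟩ := exists_pos_forall_posSemidef_bordered_smul hr ha hC w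
    exact ⟨c₀, hc₀, fun c hc => (hpsd_iff c).mpr (hpsd c hc)⟩

theorem stmt_0 (m : ℕ) (x : (Fin 1 ⊕ Fin m) → ℂ) (hx : x ≠ 0)
    (X : Matrix (Fin 1 ⊕ Fin m) (Fin 1 ⊕ Fin m) ℂ)
    (hX : X = Matrix.vecMulVec x (star x))
    (E : Matrix (Fin 1 ⊕ Fin m) (Fin 1 ⊕ Fin m) ℂ)
    (hE : E ∈ Matrix.unitaryGroup (Fin 1 ⊕ Fin m) ℂ)
    (hXE : X = E * Matrix.fromBlocks
      (fun _ _ => ((∑ i, ‖x i‖ ^ 2 : ℝ) : ℂ)) 0 0 0 * Eᴴ)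
    (a : ℂ) (b : Fin m → ℂ) (C : Matrix (Fin m) (Fin m) ℂ) (hC : C.IsHermitian)
    (Δ : Matrix (Fin 1 ⊕ Fin m) (Fin 1 ⊕ Fin m) ℂ)
    (hΔ : Δ = E * Matrix.fromBlocks (fun _ _ => a) (fun _ j => star (b j))
      (fun i _ => b i) C * Eᴴ) :
    (∃ c₀ > 0, ∀ c ∈ Set.Ioc (0 : ℝ) c₀, (X + (c : ℂ) • Δ).PosSemidef) ↔
      (a.im = 0 ∧ C.PosSemidef ∧ ∃ w, C.mulVec w = b) :=
  stmt_0_general m x hx X E hE hXE a b C Δ hΔ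
end

section
/- For a complex number D, the right derivative at c = 0 of c ↦ |0 + cD| = c|D| (for c ≥ 0) equals |D|; combined with the previous fact, for any complex matrices X, Δ ∈ ℂ^{n×n}, the one-sided directional derivative of the entrywise ℓ1 norm satisfies lim_{c→0⁺} (‖X + cΔ‖₁ − ‖X‖₁)/c = ‖Δ_{Ω_X^⊥}‖₁ + Re⟨sign(X), Δ_{Ω_X}⟩, where Ω_X is the support of X. -/
/-!
The quotient splits into entrywise quotients `(|x + c d| - |x|) / c`. Off the support of `X`
(`x = 0`) such a quotient equals `|d|` for every `c > 0`. On the support the modulus is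
differentiable at `x ≠ 0`, with derivative `⟪x, d⟫_ℝ / |x| = Re (conj (sign x) · d)` along `d`.
-/

open scoped Topology

/-- Complex sign: z/|z| for z ≠ 0, and 0 at 0. -/
noncomputable def csign (z : ℂ) : ℂ := if z = 0 then 0 else z / ((‖z‖ : ℝ) : ℂ)

/-- Entrywise ℓ1 norm of a complex matrix. -/
noncomputable def matL1 {n : ℕ} (M : Matrix (Fin n) (Fin n) ℂ) : ℝ :=
  ∑ i, ∑ j, ‖M i j‖

/-- Projection onto the support of X. -/
noncomputable def projOn {n : ℕ} (X Z : Matrix (Fin n) (Fin n) ℂ) : Matrix (Fin n) (Fin n) ℂ :=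
  Matrix.of fun i j => if X i j = 0 then 0 else Z i j

/-- Projection onto the off-support of X. -/
noncomputable def projOff {n : ℕ} (X Z : Matrix (Fin n) (Fin n) ℂ) : Matrix (Fin n) (Fin n) ℂ :=
  Matrix.of fun i j => if X i j = 0 then Z i j else 0

open Filter RealInnerProductSpace

theorem hasDerivAt_norm_add_smul {F : Type*} [NormedAddCommGroup F] [InnerProductSpace ℝ F]
    {x : F} (hx : x ≠ 0) (d : F) :
    HasDerivAt (fun t : ℝ => ‖x + t • d‖) (⟪x, d⟫ / ‖x‖) 0 := by
  have h := (((hasDerivAt_id (0 : ℝ)).smul_const d).const_add x).norm_sq.sqrt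
    (by simpa using hx)
  simpa [Real.sqrt_sq, mul_div_mul_left] using h

theorem tendsto_norm_smul_div_nhdsGT {E : Type*} [SeminormedAddCommGroup E] [NormedSpace ℝ E]
    (d : E) : Tendsto (fun c : ℝ => ‖c • d‖ / c) (𝓝[>] 0) (𝓝 ‖d‖) := by
  refine tendsto_const_nhds.congr' ?_
  filter_upwards [self_mem_nhdsWithin] with c (hc : 0 < c)
  rw [norm_smul, Real.norm_of_nonneg hc.le, mul_div_cancel_left₀ _ hc.ne']

theorem re_star_csign_mul {x : ℂ} (hx : x ≠ 0) (d : ℂ) :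
    (star (csign x) * d).re = ⟪x, d⟫ / ‖x‖ := by
  rw [csign, if_neg hx, Complex.inner, star_div₀, Complex.star_def, Complex.conj_ofReal,
    div_mul_eq_mul_div, Complex.div_ofReal_re, mul_comm]

theorem tendsto_norm_add_mul_sub_div_nhdsGT (x d : ℂ) :
    Tendsto (fun c : ℝ => (‖x + c * d‖ - ‖x‖) / c) (𝓝[>] 0)
      (𝓝 (if x = 0 then ‖d‖ else (star (csign x) * d).re)) := by
  simp only [← Complex.real_smul]
  split_ifs with hx
  · simpa [hx] using tendsto_norm_smul_div_nhdsGT d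
  · rw [re_star_csign_mul hx]
    simpa [div_eq_inv_mul] using (hasDerivAt_norm_add_smul hx d).tendsto_slope_zero_right

theorem matL1_add_smul_sub_div {n : ℕ} (X Δ : Matrix (Fin n) (Fin n) ℂ) (c : ℝ) :
    (matL1 (X + (c : ℂ) • Δ) - matL1 X) / c = ∑ i, ∑ j, (‖X i j + c * Δ i j‖ - ‖X i j‖) / c := by
  simp only [matL1, Matrix.add_apply, Matrix.smul_apply, smul_eq_mul, ← Finset.sum_sub_distrib,
    ← Finset.sum_div]

theorem matL1_projOff_add_re_inner_projOn {n : ℕ} (X Δ : Matrix (Fin n) (Fin n) ℂ) :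
    matL1 (projOff X Δ) + (∑ i, ∑ j, star (csign (X i j)) * projOn X Δ i j).re =
      ∑ i, ∑ j, if X i j = 0 then ‖Δ i j‖ else (star (csign (X i j)) * Δ i j).re := by
  simp only [matL1, projOff, projOn, Matrix.of_apply, Complex.re_sum, ← Finset.sum_add_distrib]
  refine Finset.sum_congr rfl fun i _ => Finset.sum_congr rfl fun j _ => ?_
  split_ifs <;> simp

theorem stmt_4 (n : ℕ) (D : ℂ) (X Δ : Matrix (Fin n) (Fin n) ℂ) :
    Filter.Tendsto (fun c : ℝ => ‖(0 : ℂ) + c * D‖ / c) (𝓝[>] 0)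
      (𝓝 ‖D‖) ∧
    Filter.Tendsto (fun c : ℝ => (matL1 (X + (c : ℂ) • Δ) - matL1 X) / c)
      (𝓝[>] 0)
      (𝓝 (matL1 (projOff X Δ) +
        (∑ i, ∑ j, star (csign (X i j)) * (projOn X Δ) i j).re)) := by
  constructor
  · simpa [Complex.real_smul] using tendsto_norm_smul_div_nhdsGT D
  · simp only [matL1_add_smul_sub_div, matL1_projOff_add_re_inner_projOn]
    exact tendsto_finsetSum _ fun i _ => tendsto_finsetSum _ fun j _ =>
      tendsto_norm_add_mul_sub_div_nhdsGT (X i j) (Δ i j)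
end
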